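/- (Main Theorem.) Let V and E be finite types with maps s, r : E → V and adjacency matrix A. Then the Parry–Sullivan number det(1 − A) equals Σ_D (−1)^{c(D)}, the sum ranging over all circuit configurations D; that is, det(1 − A) equals the number of vertex-disjoint sets of circuits of even size minus the number of vertex-disjoint sets of circuits of odd size (where circuit configurations D correspond bijectively to vertex-disjoint sets of circuits, the size of the set being c(D), and the empty configuration is included). -/

import Mathlib

/-!
Expand `det (1 - A)ᵀ` by the Leibniz formula and write each entry `(1 - A) v w` as a sum of
terms `±1`: a `1` when `v = w` and a `-1` for each edge from `v` to `w`. A term of the expansion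
is then a permutation `σ` together with, in each row `v`, either the diagonal `1` (so `σ v = v`)
or an edge from `v` to `σ v`. The chosen edges form a circuit configuration `D` inducing `σ`,
and this is a bijection between terms and circuit configurations. The term has value
`sign σ * (-1) ^ |s(D)|`; since `σ` moves only vertices of `s(D)` and an orbit of size `k`
contributes `(-1) ^ (k - 1)` to the sign, this is `(-1) ^ c(D)`.
-/

open scoped Classical

/-- The adjacency matrix of the finite directed multigraph with vertices `V`, edges `E`,
source map `s` and range map `r`: the `(v, w)` entry is the number of edges from `v` to `w`. -/
noncomputable def adjMatrix {V E : Type*} (s r : E → V) : Matrix V V ℤ :=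
  Matrix.of fun v w => (Nat.card {e : E // s e = v ∧ r e = w} : ℤ)

/-- A circuit configuration: a finset of edges on which `s` and `r` are injective and
whose `s`-image equals its `r`-image.  Such finsets are precisely the unions of the
circuits of vertex-disjoint sets of directed circuits. -/
def IsCircuitConfig {V E : Type*} [DecidableEq V] (s r : E → V) (D : Finset E) : Prop :=
  Set.InjOn s ↑D ∧ Set.InjOn r ↑D ∧ D.image s = D.image r

/-- `ρ` is the permutation induced by the finset of edges `D`: it sends `s e` to `r e`
for each `e ∈ D` and fixes every vertex outside the `s`-image of `D`. -/
def Induces {V E : Type*} [DecidableEq V] (s r : E → V) (D : Finset E)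
    (ρ : Equiv.Perm V) : Prop :=
  (∀ e ∈ D, ρ (s e) = r e) ∧ ∀ v ∉ D.image s, ρ v = v

/-- The permutation induced by a circuit configuration `D` (the identity if no
permutation is induced by `D`). -/
noncomputable def inducedPerm {V E : Type*} [DecidableEq V] (s r : E → V)
    (D : Finset E) : Equiv.Perm V :=
  if h : ∃ ρ : Equiv.Perm V, Induces s r D ρ then h.choose else 1

/-- The setoid on `V` whose classes are the orbits of the permutation `ρ`. -/
def sameCycleSetoid {V : Type*} (ρ : Equiv.Perm V) : Setoid V where
  r := ρ.SameCycle
  iseqv := ⟨fun x => Equiv.Perm.SameCycle.refl ρ x,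
    Equiv.Perm.SameCycle.symm, Equiv.Perm.SameCycle.trans⟩

/-- The number of circuits of a configuration `D` with induced permutation `ρ`:
the number of orbits of `ρ` that meet the `s`-image of `D`. -/
noncomputable def numCircuits {V E : Type*} (s : E → V) (D : Finset E)
    (ρ : Equiv.Perm V) : ℕ :=
  (Quotient.mk (sameCycleSetoid ρ) '' (s '' ↑D)).ncard

open Finset Equiv Equiv.Perm

namespace Equiv.Perm

variable {V : Type*} [Fintype V] [DecidableEq V]

def orbitCode (ρ : Perm V) (v : V) : Perm V ⊕ V :=
  if v ∈ ρ.support then .inl (ρ.cycleOf v) else .inr v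

theorem sameCycle_iff_orbitCode_eq (ρ : Perm V) (a b : V) :
    ρ.SameCycle a b ↔ orbitCode ρ a = orbitCode ρ b := by
  by_cases ha : a ∈ ρ.support <;> by_cases hb : b ∈ ρ.support <;>
    simp only [orbitCode, ha, hb, if_true, if_false, Sum.inl.injEq, Sum.inr.injEq,
      reduceCtorEq, iff_false]
  · exact sameCycle_iff_cycleOf_eq_of_mem_support ha hb
  · exact fun h => hb (h.mem_support_iff.1 ha)
  · exact fun h => ha (h.mem_support_iff.2 hb)
  · exact ⟨fun h => h.eq_of_left (notMem_support.1 ha), fun h => h ▸ SameCycle.refl ρ a⟩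

theorem image_orbitCode (ρ : Perm V) {S : Finset V} (hS : ρ.support ⊆ S) :
    S.image (orbitCode ρ) = ρ.cycleFactorsFinset.disjSum (S \ ρ.support) := by
  ext (c | v)
  · simp only [mem_image, inl_mem_disjSum, orbitCode]
    constructor
    · rintro ⟨v, -, hv⟩
      split_ifs at hv with h
      exact Sum.inl_injective hv ▸ cycleOf_mem_cycleFactorsFinset_iff.2 h
    · intro hc
      obtain ⟨a, ha⟩ := (mem_cycleFactorsFinset_iff.1 hc).1.nonempty_support
      have haρ : a ∈ ρ.support := mem_cycleFactorsFinset_support_le hc ha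
      exact ⟨a, hS haρ, by rw [if_pos haρ, ← cycle_is_cycleOf ha hc]⟩
  · simp only [mem_image, inr_mem_disjSum, mem_sdiff, orbitCode]
    constructor
    · rintro ⟨w, hw, hwv⟩
      split_ifs at hwv with h
      exact Sum.inr_injective hwv ▸ ⟨hw, h⟩
    · exact fun hv => ⟨v, hv.1, by rw [if_neg hv.2]⟩

theorem ncard_image_mk_sameCycleSetoid (ρ : Perm V) {S : Finset V} (hS : ρ.support ⊆ S) :
    (Quotient.mk (sameCycleSetoid ρ) '' ↑S).ncard = #ρ.cycleFactorsFinset + #(S \ ρ.support) := by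
  let code : Quotient (sameCycleSetoid ρ) → Perm V ⊕ V :=
    Quotient.lift (orbitCode ρ) fun a b h => (sameCycle_iff_orbitCode_eq ρ a b).1 h
  have hcode : Function.Injective code := by
    rintro ⟨a⟩ ⟨b⟩ h
    exact Quotient.sound ((sameCycle_iff_orbitCode_eq ρ a b).2 h)
  calc (Quotient.mk (sameCycleSetoid ρ) '' ↑S).ncard
      = (code '' (Quotient.mk (sameCycleSetoid ρ) '' ↑S)).ncard :=
        (Set.ncard_image_of_injective _ hcode).symm
    _ = #(S.image (orbitCode ρ)) := by
        rw [← Set.image_comp, ← coe_image, Set.ncard_coe_finset]; rfl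
    _ = #ρ.cycleFactorsFinset + #(S \ ρ.support) := by rw [image_orbitCode ρ hS, card_disjSum]

theorem sign_mul_neg_one_pow_card (ρ : Perm V) {S : Finset V} (hS : ∀ v ∉ S, ρ v = v) :
    (sign ρ : ℤ) * (-1) ^ #S = (-1) ^ (Quotient.mk (sameCycleSetoid ρ) '' ↑S).ncard := by
  have hsupp : ρ.support ⊆ S := fun v hv => by_contra fun h => mem_support.1 hv (hS v h)
  have hcard : #S = #(S \ ρ.support) + #ρ.support := (card_sdiff_add_card_eq_card hsupp).symm
  have hsign : (sign ρ : ℤ) = (-1) ^ (#ρ.support + #ρ.cycleFactorsFinset) := by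
    rw [sign_of_cycleType, sum_cycleType, cycleType_def, Multiset.card_map, card_val]
    push_cast; rfl
  rw [ncard_image_mk_sameCycleSetoid ρ hsupp, hsign, hcard, ← pow_add,
    show #ρ.support + #ρ.cycleFactorsFinset + (#(S \ ρ.support) + #ρ.support) =
      #ρ.cycleFactorsFinset + #(S \ ρ.support) + 2 * #ρ.support by ring, pow_add, pow_mul]
  simp

end Equiv.Perm

section InducedPerm

variable {V E : Type*} [DecidableEq V] {s r : E → V} {D : Finset E} {ρ ρ' : Perm V}

theorem Induces.eq (h : Induces s r D ρ) (h' : Induces s r D ρ') : ρ = ρ' := by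
  ext v
  by_cases hv : v ∈ D.image s
  · obtain ⟨e, he, rfl⟩ := mem_image.1 hv
    rw [h.1 e he, h'.1 e he]
  · rw [h.2 v hv, h'.2 v hv]

theorem Induces.inducedPerm_eq (h : Induces s r D ρ) : inducedPerm s r D = ρ := by
  have hex : ∃ ρ, Induces s r D ρ := ⟨ρ, h⟩
  rw [inducedPerm, dif_pos hex]
  exact hex.choose_spec.eq h

theorem IsCircuitConfig.exists_induces (hD : IsCircuitConfig s r D) :
    ∃ ρ, Induces s r D ρ := by
  obtain ⟨hs, hr, himage⟩ := hD
  have hrs : r '' ↑D = s '' ↑D := by rw [← coe_image, ← coe_image, himage]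
  let π : Perm (s '' ↑D) := (hs.bijOn_image.equiv s).symm.trans
    ((hr.bijOn_image.equiv r).trans (Equiv.setCongr hrs))
  refine ⟨ofSubtype π, fun e he => ?_, fun v hv => ofSubtype_apply_of_not_mem π ?_⟩
  · have hse : s e ∈ s '' ↑D := Set.mem_image_of_mem s he
    have hsymm : (hs.bijOn_image.equiv s).symm ⟨s e, hse⟩ = ⟨e, he⟩ :=
      (Equiv.symm_apply_eq _).2 rfl
    rw [ofSubtype_apply_of_mem π hse]
    simp only [π, Equiv.trans_apply, hsymm]
    rfl
  · rwa [← coe_image]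

theorem IsCircuitConfig.induces_inducedPerm (hD : IsCircuitConfig s r D) :
    Induces s r D (inducedPerm s r D) := by
  obtain ⟨ρ, hρ⟩ := hD.exists_induces
  rwa [hρ.inducedPerm_eq]

theorem Induces.isCircuitConfig (h : Induces s r D ρ) (hs : Set.InjOn s D) :
    IsCircuitConfig s r D := by
  have hr : ∀ e ∈ D, r e = ρ (s e) := fun e he => (h.1 e he).symm
  refine ⟨hs, fun e he e' he' hee' => hs he he' (ρ.injective ?_), ?_⟩
  · rw [← hr e he, ← hr e' he', hee']
  · have hmoved : {v | ρ v ≠ v} ⊆ ↑(D.image s) := fun v hv => by_contra fun h' => hv (h.2 v h')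
    calc D.image s = (D.image s).map (ρ : V ↪ V) := (map_perm hmoved).symm
      _ = D.image r := by
        rw [map_eq_image, image_image]
        exact image_congr fun e he => (hr e he).symm

theorem Induces.sign_mul_neg_one_pow_card [Fintype V] (h : Induces s r D ρ) :
    (sign ρ : ℤ) * (-1) ^ #(D.image s) = (-1) ^ numCircuits s D ρ := by
  rw [numCircuits, ← coe_image]
  exact Perm.sign_mul_neg_one_pow_card ρ h.2

end InducedPerm

section DetExpansion

variable {V E : Type*} [Fintype E] [DecidableEq V] (s r : E → V)

def edgesFromTo (v w : V) : Finset E := {e | s e = v ∧ r e = w}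

theorem adjMatrix_apply (v w : V) : adjMatrix s r v w = #(edgesFromTo s r v w) := by
  simp [adjMatrix, edgesFromTo, Nat.card_eq_fintype_card, Fintype.card_subtype]

/-- The terms of the entry `(1 - A) v w`: `inl ()` stands for the `1` of the identity matrix,
`inr e` for the `-1` contributed by an edge `e` from `v` to `w`. -/
def entryTerms (v w : V) : Finset (Unit ⊕ E) :=
  (if v = w then ({()} : Finset Unit) else ∅).disjSum (edgesFromTo s r v w)

def termSign : Unit ⊕ E → ℤ := Sum.elim (fun _ => 1) (fun _ => -1)

variable {s r}

@[simp]
theorem inl_mem_entryTerms {v w : V} {u : Unit} : .inl u ∈ entryTerms s r v w ↔ v = w := by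
  by_cases h : v = w <;> simp [entryTerms, h]

@[simp]
theorem inr_mem_entryTerms {v w : V} {e : E} :
    .inr e ∈ entryTerms s r v w ↔ s e = v ∧ r e = w := by
  simp [entryTerms, edgesFromTo]

variable (s r)

theorem sum_termSign_entryTerms (v w : V) :
    ∑ x ∈ entryTerms s r v w, termSign x = (1 - adjMatrix s r) v w := by
  rw [entryTerms, sum_disjSum, Matrix.sub_apply, Matrix.one_apply, adjMatrix_apply]
  split_ifs <;> simp [termSign, sub_eq_add_neg]

variable [Fintype V]

def detTerms : Finset (Σ _ : Perm V, V → Unit ⊕ E) :=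
  univ.sigma fun σ => Fintype.piFinset fun v => entryTerms s r v (σ v)

theorem det_one_sub_adjMatrix_eq_sum_detTerms :
    (1 - adjMatrix s r).det = ∑ x ∈ detTerms s r, (sign x.1 : ℤ) * ∏ v, termSign (x.2 v) := by
  rw [← Matrix.det_transpose, Matrix.det_apply', detTerms, sum_sigma]
  refine sum_congr rfl fun σ _ => ?_
  simp only [Matrix.transpose_apply, ← sum_termSign_entryTerms, prod_univ_sum, mul_sum]
  rfl

end DetExpansion

section Bijection

variable {V E : Type*} [Fintype E] {s r : E → V}

variable (s) in
noncomputable def configOf (p : V → Unit ⊕ E) : Finset E := {e | p (s e) = .inr e}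

variable (s) in
noncomputable def selectionOf (D : Finset E) (v : V) : Unit ⊕ E :=
  if h : ∃ e ∈ D, s e = v then .inr h.choose else .inl ()

@[simp]
theorem mem_configOf {p : V → Unit ⊕ E} {e : E} : e ∈ configOf s p ↔ p (s e) = .inr e := by
  simp [configOf]

theorem injOn_configOf (p : V → Unit ⊕ E) : Set.InjOn s (configOf s p) := by
  intro e he e' he' hee'
  rw [mem_coe, mem_configOf] at he he'
  rw [hee', he'] at he
  exact (Sum.inr_injective he).symm

theorem configOf_selectionOf {D : Finset E} (hs : Set.InjOn s D) :
    configOf s (selectionOf s D) = D := by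
  ext e
  rw [mem_configOf, selectionOf]
  split_ifs with h
  · obtain ⟨he, hse⟩ := h.choose_spec
    rw [Sum.inr.injEq]
    exact ⟨fun hee => hee ▸ he, fun he' => hs he he' hse⟩
  · exact ⟨False.elim, fun he => h ⟨e, he, rfl⟩⟩

variable [DecidableEq V] {σ : Perm V} {p : V → Unit ⊕ E}

theorem induces_configOf (hp : ∀ v, p v ∈ entryTerms s r v (σ v)) :
    Induces s r (configOf s p) σ := by
  refine ⟨fun e he => ?_, fun v hv => ?_⟩
  · have := hp (s e)
    rw [mem_configOf.1 he, inr_mem_entryTerms] at this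
    exact this.2.symm
  · have := hp v
    rcases hpv : p v with ⟨⟩ | e
    · rw [hpv, inl_mem_entryTerms] at this
      exact this.symm
    · rw [hpv, inr_mem_entryTerms] at this
      exact (hv (mem_image.2 ⟨e, mem_configOf.2 (by rw [this.1, hpv]), this.1⟩)).elim

theorem isCircuitConfig_configOf (hp : ∀ v, p v ∈ entryTerms s r v (σ v)) :
    IsCircuitConfig s r (configOf s p) :=
  (induces_configOf hp).isCircuitConfig (injOn_configOf p)

theorem selectionOf_mem_entryTerms {D : Finset E} (hD : IsCircuitConfig s r D) (v : V) :
    selectionOf s D v ∈ entryTerms s r v (inducedPerm s r D v) := by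
  have hρ := hD.induces_inducedPerm
  rw [selectionOf]
  split_ifs with h
  · obtain ⟨he, hse⟩ := h.choose_spec
    rw [inr_mem_entryTerms, ← hρ.1 _ he, hse]
    exact ⟨rfl, rfl⟩
  · rw [inl_mem_entryTerms, hρ.2 v (by simpa using h)]

theorem selectionOf_configOf (hp : ∀ v, p v ∈ entryTerms s r v (σ v)) :
    selectionOf s (configOf s p) = p := by
  funext v
  rw [selectionOf]
  split_ifs with h
  · obtain ⟨he, hse⟩ := h.choose_spec
    rw [← mem_configOf.1 he, hse]
  · rcases hpv : p v with ⟨⟩ | e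
    · rfl
    · have hse := (inr_mem_entryTerms.1 (hpv ▸ hp v)).1
      exact (h ⟨e, mem_configOf.2 (by rw [hse, hpv]), hse⟩).elim

theorem image_configOf [Fintype V] (hp : ∀ v, p v ∈ entryTerms s r v (σ v)) :
    (configOf s p).image s = ({v | (p v).isRight} : Finset V) := by
  ext v
  simp only [mem_image, mem_configOf, mem_filter, mem_univ, true_and]
  constructor
  · rintro ⟨e, he, rfl⟩
    rw [he]; rfl
  · intro hv
    obtain ⟨e, he⟩ := Sum.isRight_iff.1 hv
    have hse := (inr_mem_entryTerms.1 (he ▸ hp v)).1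
    exact ⟨e, by rw [hse, he], hse⟩

end Bijection

theorem prod_termSign {V E : Type*} [Fintype V] (p : V → Unit ⊕ E) :
    ∏ v, termSign (p v) = (-1) ^ #{v | (p v).isRight} := by
  have : ∀ v, termSign (p v) = if (p v).isRight then -1 else 1 := fun v => by
    cases p v <;> rfl
  simp only [this, prod_ite, prod_const_one, prod_const, mul_one]

theorem mem_detTerms {V E : Type*} [Fintype V] [Fintype E] [DecidableEq V] {s r : E → V}
    {x : Σ _ : Perm V, V → Unit ⊕ E} :
    x ∈ detTerms s r ↔ ∀ v, x.2 v ∈ entryTerms s r v (x.1 v) := by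
  simp [detTerms]

theorem sum_detTerms_eq_sum_isCircuitConfig {V E : Type*} [Fintype V] [Fintype E]
    [DecidableEq V] (s r : E → V) :
    ∑ x ∈ detTerms s r, (sign x.1 : ℤ) * ∏ v, termSign (x.2 v) =
      ∑ D with IsCircuitConfig s r D, (-1 : ℤ) ^ numCircuits s D (inducedPerm s r D) := by
  refine sum_nbij' (fun x => configOf s x.2) (fun D => ⟨inducedPerm s r D, selectionOf s D⟩)
    (fun x hx => ?_) (fun D hD => ?_) (fun x hx => ?_) (fun D hD => ?_) (fun x hx => ?_)
  · exact mem_filter.2 ⟨mem_univ _, isCircuitConfig_configOf (mem_detTerms.1 hx)⟩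
  · exact mem_detTerms.2 (selectionOf_mem_entryTerms (mem_filter.1 hD).2)
  · have hp := mem_detTerms.1 hx
    simp only [(induces_configOf hp).inducedPerm_eq, selectionOf_configOf hp]
  · exact configOf_selectionOf (mem_filter.1 hD).2.1
  · have hp := mem_detTerms.1 hx
    have hρ := induces_configOf hp
    rw [hρ.inducedPerm_eq, prod_termSign, ← image_configOf hp, hρ.sign_mul_neg_one_pow_card]

theorem sum_neg_one_pow_eq_card_even_sub_card_odd {ι : Type*} (t : Finset ι) (f : ι → ℕ) :
    ∑ i ∈ t, (-1 : ℤ) ^ f i = #{i ∈ t | Even (f i)} - #{i ∈ t | Odd (f i)} := by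
  simp only [neg_one_pow_eq_ite, sum_ite, sum_const, nsmul_eq_mul, mul_one, mul_neg,
    Nat.not_even_iff_odd, sub_eq_add_neg]

/-- Main theorem: the Parry–Sullivan number `det (1 - A)` of a finite directed multigraph
equals `∑ D, (-1) ^ c(D)` over all circuit configurations `D`; that is, it equals the
number of vertex-disjoint sets of circuits of even size minus the number of
vertex-disjoint sets of circuits of odd size. -/
theorem parry_sullivan_eq_signed_circuit_count {V E : Type*} [Fintype V] [Fintype E]
    [DecidableEq V] (s r : E → V) :
    (Matrix.det ((1 : Matrix V V ℤ) - adjMatrix s r) =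
      ∑ D ∈ Finset.univ.filter (fun D : Finset E => IsCircuitConfig s r D),
        (-1 : ℤ) ^ numCircuits s D (inducedPerm s r D)) ∧
    (Matrix.det ((1 : Matrix V V ℤ) - adjMatrix s r) =
      ((Finset.univ.filter (fun D : Finset E =>
          IsCircuitConfig s r D ∧ Even (numCircuits s D (inducedPerm s r D)))).card : ℤ) -
      ((Finset.univ.filter (fun D : Finset E =>
          IsCircuitConfig s r D ∧ Odd (numCircuits s D (inducedPerm s r D)))).card : ℤ)) := by
  have hsum : (1 - adjMatrix s r).det =
      ∑ D with IsCircuitConfig s r D, (-1 : ℤ) ^ numCircuits s D (inducedPerm s r D) := by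
    rw [det_one_sub_adjMatrix_eq_sum_detTerms, sum_detTerms_eq_sum_isCircuitConfig]
  refine ⟨hsum, ?_⟩
  rw [hsum, sum_neg_one_pow_eq_card_even_sub_card_odd, filter_filter, filter_filter]
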